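/- arXiv:2111.14811 — 3 statements merged into one kernel-verified Lean document; each statement's English description precedes it below -/
import Mathlib

section
/- Let V be a real inner product space of finite dimension n, and let φ' : Λ²V → Λ²V be a symmetric endomorphism which is induced by a 4-form, i.e. φ'(u∧v, w∧z) := Φ(u,v,w,z) for some alternating 4-linear form Φ. If φ' is an involutive isometry (φ'² = Id), then the trace of φ' is an odd integer when dim Λ²V = n(n−1)/2 is odd; but Tr(φ') = Σ_{i<j} Φ(eᵢ, eⱼ, eᵢ, eⱼ) = 0 since Φ is alternating. Hence no such φ' exists when n(n−1)/2 is odd. -/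
open scoped RealInnerProductSpace

lemma trace_eq_sum_inner_aux {W : Type*} [NormedAddCommGroup W] [InnerProductSpace ℝ W]
    [FiniteDimensional ℝ W] {ι : Type*} [Fintype ι] [DecidableEq ι]
    (b : OrthonormalBasis ι ℝ W) (f : W →ₗ[ℝ] W) :
    LinearMap.trace ℝ W f = ∑ i, ⟪b i, f (b i)⟫ := by
  rw [LinearMap.trace_eq_matrix_trace ℝ b.toBasis, Matrix.trace]
  simp [Matrix.diag, LinearMap.toMatrix_apply, OrthonormalBasis.coe_toBasis,
    OrthonormalBasis.coe_toBasis_repr_apply, OrthonormalBasis.repr_apply_apply]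

/-- Let `V` be an `n`-dimensional real inner product space and `W` a model for `Λ²V`
(with wedge map `wdg`, spanning image, Gram inner product). Suppose
`φ' : W → W` is a symmetric endomorphism induced by an alternating 4-form `Φ`, i.e.
`⟨φ'(u∧v), w∧z⟩ = Φ(u,v,w,z)`, and `φ'` is an involutive isometry (`φ'² = Id`). If
`dim Λ²V = n(n-1)/2` is odd, this is impossible: the trace of a symmetric involution on an
odd-dimensional space is an odd integer, yet `Tr(φ') = Σ_{i<j} Φ(eᵢ,eⱼ,eᵢ,eⱼ) = 0`. -/
theorem no_involution_from_four_form {V W : Type*}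
    [NormedAddCommGroup V] [InnerProductSpace ℝ V] [FiniteDimensional ℝ V]
    [NormedAddCommGroup W] [InnerProductSpace ℝ W] [FiniteDimensional ℝ W]
    (n : ℕ) (hdimV : Module.finrank ℝ V = n)
    (wdg : V →ₗ[ℝ] V →ₗ[ℝ] W)
    (halt : ∀ v : V, wdg v v = 0)
    (hspan : Submodule.span ℝ {x : W | ∃ u v : V, x = wdg u v} = ⊤)
    (hinner : ∀ u v w z : V,
      ⟪wdg u v, wdg w z⟫ = ⟪u, w⟫ * ⟪v, z⟫ - ⟪u, z⟫ * ⟪v, w⟫)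
    (hdimW : Module.finrank ℝ W = n * (n - 1) / 2)
    (hodd : Odd (n * (n - 1) / 2))
    (Φ : AlternatingMap ℝ V ℝ (Fin 4))
    (φ' : W →ₗ[ℝ] W)
    (hsym : ∀ ω τ : W, ⟪φ' ω, τ⟫ = ⟪ω, φ' τ⟫)
    (hind : ∀ u v w z : V, ⟪φ' (wdg u v), wdg w z⟫ = Φ ![u, v, w, z])
    (hinv : φ' ∘ₗ φ' = LinearMap.id) :
    False := by
  classical
  set d := Module.finrank ℝ W with hd
  have hoddd : Odd d := hdimW ▸ hodd
  -- orthonormal basis of V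
  let e : OrthonormalBasis (Fin n) ℝ V := (stdOrthonormalBasis ℝ V).reindex (finCongr hdimV)
  have he := orthonormal_iff_ite.mp e.orthonormal
  -- wedge family indexed by pairs i < j
  let ι := Σ j : Fin n, Fin j.val
  let f : ι → W := fun p => wdg (e ⟨p.2.val, p.2.isLt.trans p.1.isLt⟩) (e p.1)
  have key : ∀ (j j' : Fin n) (i : Fin j.val) (i' : Fin j'.val),
      ⟪f ⟨j, i⟩, f ⟨j', i'⟩⟫ = if (⟨j, i⟩ : ι) = ⟨j', i'⟩ then 1 else 0 := by
    intro j j' i i'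
    have hlt : (i : ℕ) < (j : ℕ) := i.isLt
    have hlt' : (i' : ℕ) < (j' : ℕ)  := i'.isLt
    have hii : (⟨j, i⟩ : ι) = ⟨j', i'⟩ ↔ ((j : ℕ) = (j' : ℕ) ∧ (i : ℕ) = (i' : ℕ)) := by
      constructor
      · rintro h; cases h; exact ⟨rfl, rfl⟩
      · rintro ⟨hj, hi⟩
        have hj2 : j = j' := Fin.ext hj
        subst hj2
        have hi2 : i = i' := Fin.ext hi
        rw [hi2]
    show ⟪wdg (e ⟨(i : ℕ), hlt.trans j.isLt⟩) (e j), wdg (e ⟨(i' : ℕ), hlt'.trans j'.isLt⟩) (e j')⟫ = _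
    rw [hinner, he, he, he, he, if_congr hii rfl rfl]
    simp only [Fin.ext_iff, Fin.val_mk]
    split_ifs <;> first
    | (exfalso; omega)
    | norm_num
  have hf : Orthonormal ℝ f := by
    rw [orthonormal_iff_ite]
    rintro ⟨j, i⟩ ⟨j', i'⟩
    exact key j j' i i'
  -- cardinality
  have hcard : Fintype.card ι = d := by
    rw [hdimW]
    rw [Fintype.card_sigma]
    simp only [Fintype.card_fin]
    exact (Fin.sum_univ_eq_sum_range (fun m => m) n).trans (Finset.sum_range_id n)
  have hdpos : 0 < d := hoddd.pos
  haveI : Nonempty ι := Fintype.card_pos_iff.mp (by omega)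
  let bb : Module.Basis ι ℝ W := basisOfLinearIndependentOfCardEqFinrank hf.linearIndependent
    (hcard.trans hd)
  have hbb : ⇑bb = f := coe_basisOfLinearIndependentOfCardEqFinrank _ _
  have hfo : Orthonormal ℝ ⇑bb := hbb ▸ hf
  let B : OrthonormalBasis ι ℝ W := bb.toOrthonormalBasis hfo
  have hB : ⇑B = f := by
    rw [← hbb]; exact Module.Basis.coe_toOrthonormalBasis bb hfo
  -- trace is zero
  have htr0 : LinearMap.trace ℝ W φ' = 0 := by
    rw [trace_eq_sum_inner_aux B φ']
    apply Finset.sum_eq_zero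
    rintro ⟨j, i⟩ -
    rw [hB]
    show ⟪wdg (e ⟨(i : ℕ), i.isLt.trans j.isLt⟩) (e j),
        φ' (wdg (e ⟨(i : ℕ), i.isLt.trans j.isLt⟩) (e j))⟫ = 0
    rw [real_inner_comm, hind]
    exact Φ.map_eq_zero_of_eq _ (i := 0) (j := 2) (by simp) (by decide)
  -- eigenvalue decomposition
  have hsym' : φ'.IsSymmetric := hsym
  let B2 := hsym'.eigenvectorBasis hd.symm
  let μ := hsym'.eigenvalues hd.symm
  have hev : ∀ i, φ' (B2 i) = μ i • B2 i := fun i => hsym'.apply_eigenvectorBasis hd.symm i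
  have hmu : ∀ i, μ i = 1 ∨ μ i = -1 := by
    intro i
    have h1 : φ' (φ' (B2 i)) = B2 i := by
      have := congrArg (fun g => g (B2 i)) hinv
      simpa using this
    rw [hev, map_smul, hev, smul_smul] at h1
    have hne : B2 i ≠ 0 := B2.toBasis.ne_zero i
    have h2 : (μ i * μ i - 1) • B2 i = 0 := by
      rw [sub_smul, one_smul, h1, sub_self]
    rcases smul_eq_zero.mp h2 with h | h
    · exact mul_self_eq_one_iff.mp (by linarith)
    · exact absurd h hne
  have hBB2 := orthonormal_iff_ite.mp B2.orthonormal
  have htr1 : LinearMap.trace ℝ W φ' = ∑ i, μ i := by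
    rw [trace_eq_sum_inner_aux B2 φ']
    apply Finset.sum_congr rfl
    intro i _
    rw [hev, real_inner_smul_right, hBB2]
    simp
  have h0 : (0 : ℝ) = ∑ i, μ i := htr0 ▸ htr1
  -- parity contradiction
  set S := Finset.univ.filter (fun i : Fin d => μ i = 1) with hS
  set T := Finset.univ.filter (fun i : Fin d => ¬ μ i = 1) with hT
  have hsum : ∑ i, μ i = (S.card : ℝ) - (T.card : ℝ) := by
    rw [← Finset.sum_filter_add_sum_filter_not Finset.univ (fun i => μ i = 1), ← hS, ← hT]
    have hA : ∑ i ∈ S, μ i = (S.card : ℝ) := by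
      rw [Finset.sum_congr rfl (fun i hi => (Finset.mem_filter.mp hi).2)]
      simp [hS]
    have hBn : ∑ i ∈ T, μ i = -(T.card : ℝ) := by
      have : ∀ i ∈ T, μ i = -1 := by
        intro i hi
        rcases hmu i with h | h
        · exact absurd h (Finset.mem_filter.mp hi).2
        · exact h
      rw [Finset.sum_congr rfl this]
      simp
    rw [hA, hBn]
    ring
  have hcards : S.card + T.card = d := by
    rw [hS, hT]
    rw [Finset.card_filter_add_card_filter_not]
    simp
  have hEq : (S.card : ℝ) = (T.card : ℝ) := by
    rw [hsum] at h0; linarith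
  have hEq' : S.card = T.card := Nat.cast_injective hEq
  exact (Nat.not_even_iff_odd.mpr hoddd) ⟨S.card, by omega⟩
end

section
/- Let K be a symmetric tensor of rank k+2 on an n-dimensional inner product space, symmetric in its first k arguments and in its last 2 arguments, such that K(v,…,v,v,·) = 0 for all v. Then for all v, w: K(v,…,v,w,w) = (k(k−1)/2)·K(w,w,v,…,v,v) (where on the right, w appears twice among the first k slots and v fills the rest including the last two). -/
set_option maxHeartbeats 1600000

open Finset

/-- Let `K` be a `(k+2)`-linear form on `V`, symmetric in its first `k` arguments (indices
`< k`) and in its last `2` arguments (indices `k`, `k+1`), such that `K(v,…,v,v,·) = 0` for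
all `v`. Then for all `v, w`:
`K(v,…,v,w,w) = (k(k-1)/2)·K(w,w,v,…,v,v)`, where on the right `w` appears twice among the
first `k` slots and `v` fills the rest. -/
theorem normal_tensor_identity {V : Type*} [AddCommGroup V] [Module ℝ V]
    (k : ℕ) (hk : 2 ≤ k)
    (K : MultilinearMap ℝ (fun _ : Fin (k + 2) => V) ℝ)
    (hsym1 : ∀ (v : Fin (k + 2) → V) (i j : Fin (k + 2)), (i : ℕ) < k → (j : ℕ) < k →
      K (v ∘ (Equiv.swap i j)) = K v)
    (hsym2 : ∀ v : Fin (k + 2) → V,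
      K (v ∘ (Equiv.swap (Fin.last (k + 1)) (Fin.castSucc (Fin.last k)))) = K v)
    (hvanish : ∀ v w : V, K (fun i => if (i : ℕ) ≤ k then v else w) = 0) :
    ∀ v w : V,
      K (fun i => if (i : ℕ) < k then v else w) =
        (k : ℝ) * ((k : ℝ) - 1) / 2 * K (fun i => if (i : ℕ) < 2 then w else v) := by
  classical
  intro v w
  set i0 : Fin (k + 2) := ⟨0, by omega⟩ with hi0def
  set i1 : Fin (k + 2) := ⟨1, by omega⟩ with hi1def
  set sk : Fin (k + 2) := ⟨k, by omega⟩ with hskdef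
  set sk1 : Fin (k + 2) := ⟨k + 1, by omega⟩ with hsk1def
  set pat : Fin (k + 2) → Fin (k + 2) → Fin (k + 2) → V :=
    fun i j l => if l = i ∨ l = j then w else v with hpatdef
  -- swapping indices in a `pat`
  have pat_comp : ∀ (i j : Fin (k + 2)) (τ : Equiv.Perm (Fin (k + 2))), τ⁻¹ = τ →
      pat i j ∘ τ = pat (τ i) (τ j) := by
    intro i j τ hτ
    have hinv : ∀ x, τ (τ x) = x := by
      intro x; nth_rewrite 1 [← hτ]; exact τ.symm_apply_apply x
    funext l
    simp only [hpatdef, Function.comp_apply]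
    refine if_congr (or_congr ?_ ?_) rfl rfl <;>
      (constructor <;> (intro h; subst h; simp [hinv]))
  have swap_pat : ∀ (i j a b : Fin (k + 2)), (a : ℕ) < k → (b : ℕ) < k →
      K (pat (Equiv.swap a b i) (Equiv.swap a b j)) = K (pat i j) := by
    intro i j a b ha hb
    rw [← pat_comp i j _ (Equiv.swap_inv a b)]
    exact hsym1 (pat i j) a b ha hb
  have swap2_pat : ∀ (i j : Fin (k + 2)),
      K (pat (Equiv.swap sk1 sk i) (Equiv.swap sk1 sk j)) = K (pat i j) := by
    intro i j
    rw [← pat_comp i j _ (Equiv.swap_inv sk1 sk)]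
    have h1 : Fin.last (k + 1) = sk1 := by ext; simp [hsk1def]
    have h2 : Fin.castSucc (Fin.last k) = sk := by ext; simp [hskdef]
    have := hsym2 (pat i j)
    rwa [h1, h2] at this
  have hi0k : (i0 : ℕ) < k := by simp [hi0def]; omega
  have hi1k : (i1 : ℕ) < k := by simp [hi1def]; omega
  have hi01 : i0 ≠ i1 := by simp [hi0def, hi1def, Fin.ext_iff]
  -- all `pat i j` with `i ≠ j`, `i j < k` are equal to `A := K (pat i0 i1)`
  have patA : ∀ i j : Fin (k + 2), i ≠ j → (i : ℕ) < k → (j : ℕ) < k →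
      K (pat i j) = K (pat i0 i1) := by
    intro i j hij hi hj
    set j1 : Fin (k + 2) := Equiv.swap i i0 j with hj1def
    have step1 : K (pat i j) = K (pat i0 j1) := by
      have := swap_pat i0 j1 i i0 hi hi0k
      rwa [Equiv.swap_apply_right, hj1def, Equiv.swap_apply_self] at this
    have hj1 : (j1 : ℕ) < k ∧ j1 ≠ i0 := by
      rw [hj1def, Equiv.swap_apply_def]
      split_ifs with h1 h2
      · exact absurd h1.symm hij
      · subst h2
        refine ⟨hi, fun h => hij ?_⟩
        rw [← h]
      · refine ⟨hj, h2⟩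
    have step2 : K (pat i0 j1) = K (pat i0 i1) := by
      have := swap_pat i0 i1 j1 i1 hj1.1 hi1k
      rwa [Equiv.swap_apply_right,
        Equiv.swap_apply_of_ne_of_ne hj1.2.symm hi01] at this
    rw [step1, step2]
  -- all `pat i sk1` with `i < k` equal `B := K (pat i0 sk1)`
  have hskk : ∀ i : Fin (k + 2), (i : ℕ) < k → i ≠ sk1 ∧ i ≠ sk := by
    intro i hi
    constructor <;> (simp [hsk1def, hskdef, Fin.ext_iff]; omega)
  have patB : ∀ i : Fin (k + 2), (i : ℕ) < k → K (pat i sk1) = K (pat i0 sk1) := by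
    intro i hi
    have := swap_pat i0 sk1 i i0 hi hi0k
    rwa [Equiv.swap_apply_right,
      Equiv.swap_apply_of_ne_of_ne (hskk i hi).1.symm (hskk i0 hi0k).1.symm] at this
  have patB' : ∀ i : Fin (k + 2), (i : ℕ) < k → K (pat i sk) = K (pat i0 sk1) := by
    intro i hi
    have := swap2_pat i sk
    rw [Equiv.swap_apply_of_ne_of_ne (hskk i hi).1 (hskk i hi).2,
      Equiv.swap_apply_right] at this
    rw [← this]
    exact patB i hi
  have pat_comm : ∀ i j, pat i j = pat j i := by
    intro i j; funext l; simp [hpatdef, or_comm]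
  -- the index sets
  obtain ⟨T, hTdef⟩ : ∃ T : Finset (Fin (k+2)), T = univ.filter (fun i : Fin (k+2) => (i:ℕ) ≤ k) := ⟨_, rfl⟩
  obtain ⟨T', hT'def⟩ : ∃ T' : Finset (Fin (k+2)), T' = univ.filter (fun i : Fin (k+2) => (i:ℕ) < k) := ⟨_, rfl⟩
  have hskT' : sk ∉ T' := by simp [hT'def, hskdef]
  have hTins : T = insert sk T' := by
    ext i
    simp [hTdef, hT'def, mem_insert, hskdef, Fin.ext_iff]
    omega
  have hT'card : T'.card = k := by
    have : T' = Finset.map (Fin.castLEEmb (show k ≤ k + 2 by omega)) univ := by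
      ext i
      simp only [hT'def, mem_filter, mem_univ, true_and, mem_map, Fin.castLEEmb,
        Function.Embedding.coeFn_mk]
      constructor
      · intro hi
        exact ⟨⟨(i : ℕ), hi⟩, by ext; simp [Fin.castLE]⟩
      · rintro ⟨j, rfl⟩
        simpa [Fin.castLE] using j.2
    rw [this, card_map, card_univ, Fintype.card_fin]
  -- polarization: full expansion of the vanishing identity
  have expand : ∀ (u : V) (t : ℝ),
      ∑ s ∈ T.powerset,
        t ^ s.card * K (fun i => if i ∈ s then w else if (i : ℕ) ≤ k then v else u) = 0 := by
    intro u t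
    have hadd : (fun i : Fin (k + 2) => if (i : ℕ) ≤ k then t • w else 0)
        + (fun i : Fin (k + 2) => if (i : ℕ) ≤ k then v else u)
        = fun i : Fin (k + 2) => if (i : ℕ) ≤ k then v + t • w else u := by
      funext i
      by_cases h : (i : ℕ) ≤ k <;> simp [h, add_comm]
    have h2 := K.map_add_univ (fun i : Fin (k + 2) => if (i : ℕ) ≤ k then t • w else 0)
      (fun i : Fin (k + 2) => if (i : ℕ) ≤ k then v else u)
    rw [hadd, hvanish (v + t • w) u] at h2
    have key : ∀ s : Finset (Fin (k + 2)),
        K (s.piecewise (fun i => if (i : ℕ) ≤ k then t • w else 0)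
            (fun i => if (i : ℕ) ≤ k then v else u))
          = if s ∈ T.powerset then
              t ^ s.card * K (fun i => if i ∈ s then w else if (i : ℕ) ≤ k then v else u)
            else 0 := by
      intro s
      by_cases hs : s ∈ T.powerset
      · rw [if_pos hs]
        rw [hTdef, mem_powerset] at hs
        have hsub : ∀ i ∈ s, (i : ℕ) ≤ k := by
          intro i hi; have := hs hi; simpa using this
        have hm : s.piecewise (fun i => if (i : ℕ) ≤ k then t • w else 0)
              (fun i => if (i : ℕ) ≤ k then v else u)
            = s.piecewise
              (fun i => t • (s.piecewise (fun _ => w)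
                  (fun i : Fin (k + 2) => if (i : ℕ) ≤ k then v else u)) i)
              (s.piecewise (fun _ => w)
                  (fun i : Fin (k + 2) => if (i : ℕ) ≤ k then v else u)) := by
          funext i
          by_cases hi : i ∈ s
          · simp only [Finset.piecewise, hi, if_true, if_pos (hsub i hi)]
          · simp only [Finset.piecewise, hi, if_false]
        rw [hm, K.map_piecewise_smul]
        simp only [prod_const, smul_eq_mul]
        congr 1
      · rw [if_neg hs]
        rw [hTdef, mem_powerset] at hs
        obtain ⟨i, his, hik⟩ : ∃ i ∈ s, ¬ (i : ℕ) ≤ k := by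
          by_contra hcon
          push_neg at hcon
          exact hs fun i hi => by simp [hcon i hi]
        exact K.map_coord_zero i (by simp [Finset.piecewise, his, hik])
    calc ∑ s ∈ T.powerset,
          t ^ s.card * K (fun i => if i ∈ s then w else if (i : ℕ) ≤ k then v else u)
        = ∑ s ∈ T.powerset,
            K (s.piecewise (fun i => if (i : ℕ) ≤ k then t • w else 0)
              (fun i => if (i : ℕ) ≤ k then v else u)) := by
          refine sum_congr rfl fun s hs => ?_
          rw [key s, if_pos hs]
      _ = ∑ s : Finset (Fin (k + 2)),
            K (s.piecewise (fun i => if (i : ℕ) ≤ k then t • w else 0)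
              (fun i => if (i : ℕ) ≤ k then v else u)) := by
          refine sum_subset (subset_univ _) fun s _ hs => ?_
          rw [key s, if_neg hs]
      _ = 0 := h2.symm
  -- all coefficients of the polarization polynomial vanish
  have coeffs : ∀ (u : V) (j : ℕ),
      ∑ s ∈ T.powersetCard j,
        K (fun i => if i ∈ s then w else if (i : ℕ) ≤ k then v else u) = 0 := by
    intro u j
    have hp0 : (∑ s ∈ T.powerset,
        Polynomial.C (K (fun i => if i ∈ s then w else if (i : ℕ) ≤ k then v else u))
          * Polynomial.X ^ s.card) = 0 := by
      apply Polynomial.funext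
      intro t
      simp only [Polynomial.eval_finset_sum, Polynomial.eval_mul, Polynomial.eval_pow,
        Polynomial.eval_C, Polynomial.eval_X, Polynomial.eval_zero]
      rw [← expand u t]
      exact sum_congr rfl fun s _ => mul_comm _ _
    have hc := congrArg (fun q => Polynomial.coeff q j) hp0
    simp only [Polynomial.finset_sum_coeff, Polynomial.coeff_C_mul,
      Polynomial.coeff_X_pow, Polynomial.coeff_zero, mul_ite, mul_one, mul_zero] at hc
    rw [← sum_filter] at hc
    rw [powersetCard_eq_filter]
    have hfil : filter (fun x : Finset (Fin (k + 2)) => #x = j) T.powerset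
        = filter (fun a => j = #a) T.powerset := by
      apply filter_congr
      intro s _
      exact eq_comm
    rw [hfil]
    exact hc
  -- coefficient 1 with u = w :  C + k•B = 0
  have eq1 : K (pat sk sk1) + (k : ℝ) * K (pat i0 sk1) = 0 := by
    have h := coeffs w 1
    rw [powersetCard_one, sum_map] at h
    have hterm : ∀ i ∈ T,
        K (fun l => if l ∈ ({i} : Finset (Fin (k + 2))) then w
          else if (l : ℕ) ≤ k then v else w) = K (pat i sk1) := by
      intro i hi
      congr 1
      funext l
      by_cases hl : l = i
      · simp [hpatdef, hl]
      · by_cases hl2 : l = sk1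
        · have hle : ¬ ((l : ℕ) ≤ k) := by subst hl2; simp [hsk1def]
          subst hl2; simp [hpatdef, hl, hle]
        · have hval : (l : ℕ) ≠ k + 1 := by simpa [hsk1def, Fin.ext_iff] using hl2
          have hle : (l : ℕ) ≤ k := by have := l.isLt; omega
          simp [hpatdef, hl, hl2, hle]
    rw [sum_congr rfl (fun i hi => by
      simpa using hterm i hi)] at h
    rw [hTins, sum_insert hskT'] at h
    rw [sum_congr rfl (fun i hi => patB i (by simpa [hT'def] using hi))] at h
    rw [sum_const, nsmul_eq_mul, hT'card] at h
    exact h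
  -- coefficient 2 with u = v :  choose(k,2)•A + k•B = 0
  have eq2 : (k.choose 2 : ℝ) * K (pat i0 i1) + (k : ℝ) * K (pat i0 sk1) = 0 := by
    have h := coeffs v 2
    have hpatv : ∀ s : Finset (Fin (k + 2)),
        (fun i => if i ∈ s then w else if (i : ℕ) ≤ k then v else v)
          = fun i => if i ∈ s then w else v := by
      intro s; funext i; by_cases hi : i ∈ s <;> simp [hi]
    rw [sum_congr rfl (fun s _ => by rw [hpatv s])] at h
    have hsplit : T.powersetCard 2
        = T'.powersetCard 2 ∪ (T'.powersetCard 1).image (insert sk) := by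
      rw [hTins]; exact powersetCard_succ_insert hskT' 1
    have hdisj : Disjoint (T'.powersetCard 2) ((T'.powersetCard 1).image (insert sk)) := by
      rw [disjoint_left]
      intro s hs1 hs2
      rw [mem_powersetCard] at hs1
      have hns : sk ∉ s := fun hcon => hskT' (hs1.1 hcon)
      obtain ⟨s', _, rfl⟩ := mem_image.mp hs2
      exact hns (mem_insert_self _ _)
    rw [hsplit, sum_union hdisj] at h
    have hA : ∀ s ∈ T'.powersetCard 2,
        K (fun i => if i ∈ s then w else v) = K (pat i0 i1) := by
      intro s hs
      rw [mem_powersetCard] at hs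
      obtain ⟨i, j, hij, rfl⟩ := card_eq_two.mp hs.2
      have hi : (i : ℕ) < k := by
        have := hs.1 (mem_insert_self _ _); simpa [hT'def] using this
      have hj : (j : ℕ) < k := by
        have := hs.1 (mem_insert_of_mem (mem_singleton_self _)); simpa [hT'def] using this
      have hps : (fun l => if l ∈ ({i, j} : Finset (Fin (k + 2))) then w else v) = pat i j := by
        funext l; simp [hpatdef, mem_insert, mem_singleton]
      rw [hps]
      exact patA i j hij hi hj
    rw [sum_congr rfl hA, sum_const, card_powersetCard, hT'card, nsmul_eq_mul] at h
    have hinj : ∀ s1 ∈ T'.powersetCard 1, ∀ s2 ∈ T'.powersetCard 1,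
        insert sk s1 = insert sk s2 → s1 = s2 := by
      intro s1 h1 s2 h2 hins
      rw [mem_powersetCard] at h1 h2
      have n1 : sk ∉ s1 := fun hcon => hskT' (h1.1 hcon)
      have n2 : sk ∉ s2 := fun hcon => hskT' (h2.1 hcon)
      rw [← erase_insert n1, ← erase_insert n2, hins]
    rw [sum_image hinj] at h
    have hB : ∀ s ∈ T'.powersetCard 1,
        K (fun i => if i ∈ insert sk s then w else v) = K (pat i0 sk1) := by
      intro s hs
      rw [mem_powersetCard, card_eq_one] at hs
      obtain ⟨hsub, i, rfl⟩ := hs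
      have hi : (i : ℕ) < k := by
        have := hsub (mem_singleton_self i); simpa [hT'def] using this
      have hps : (fun l => if l ∈ insert sk ({i} : Finset (Fin (k + 2))) then w else v)
          = pat i sk := by
        funext l; simp [hpatdef, mem_insert, mem_singleton, or_comm]
      rw [hps]
      exact patB' i hi
    rw [sum_congr rfl hB, sum_const, card_powersetCard, hT'card, nsmul_eq_mul] at h
    simpa [Nat.choose_one_right] using h
  -- identify the goal's two `K`-values
  have hC : K (fun i => if (i : ℕ) < k then v else w) = K (pat sk sk1) := by
    congr 1
    funext l
    by_cases h1 : l = sk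
    · have : ¬ ((l : ℕ) < k) := by subst h1; simp [hskdef]
      subst h1; simp [hpatdef, this]
    · by_cases h2 : l = sk1
      · have : ¬ ((l : ℕ) < k) := by subst h2; simp [hsk1def]
        subst h2; simp [hpatdef, h1, this]
      · have hv1 : (l : ℕ) ≠ k := by simpa [hskdef, Fin.ext_iff] using h1
        have hv2 : (l : ℕ) ≠ k + 1 := by simpa [hsk1def, Fin.ext_iff] using h2
        have : (l : ℕ) < k := by have := l.isLt; omega
        simp [hpatdef, h1, h2, this]
  have hA' : K (fun i => if (i : ℕ) < 2 then w else v) = K (pat i0 i1) := by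
    congr 1
    funext l
    by_cases h1 : l = i0
    · have : (l : ℕ) < 2 := by subst h1; simp [hi0def]
      subst h1; simp [hpatdef, this]
    · by_cases h2 : l = i1
      · have : (l : ℕ) < 2 := by subst h2; simp [hi1def]
        subst h2; simp [hpatdef, h1, this]
      · have hv1 : (l : ℕ) ≠ 0 := fun h => h1 (Fin.ext (by rw [h]))
        have hv2 : (l : ℕ) ≠ 1 := by simpa [hi1def, Fin.ext_iff] using h2
        have : ¬ ((l : ℕ) < 2) := by omega
        simp [hpatdef, h1, h2, this]
  -- the binomial coefficient
  have hch : ((k.choose 2 : ℕ) : ℝ) = (k : ℝ) * ((k : ℝ) - 1) / 2 := by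
    have hdvd : 2 ∣ k * (k - 1) := by
      rcases Nat.even_or_odd k with he | ho
      · exact Dvd.dvd.mul_right he.two_dvd _
      · exact Dvd.dvd.mul_left (Nat.Odd.sub_odd ho odd_one).two_dvd _
    have h2 : (k.choose 2) * 2 = k * (k - 1) := by
      rw [Nat.choose_two_right]
      exact Nat.div_mul_cancel hdvd
    have h3 := congrArg (fun n : ℕ => (n : ℝ)) h2
    simp only [Nat.cast_mul, Nat.cast_ofNat, Nat.cast_sub (show 1 ≤ k by omega),
      Nat.cast_one] at h3
    linarith
  rw [hC, hA', ← hch]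
  linarith [eq1, eq2]
end

section
/- For n ≥ 4 and p ≥ 1, define r_{n,p,k} := (2p/3)·√((n−1)/(k(n+k−2))) and δ₁(n,k,p) := (p/(2k(n+k−2)) + r_{n,p,k}) / (1 − p/(2k(n+k−2)) + r_{n,p,k}). Then for k ≥ 2, δ₁(n,k,p) is strictly decreasing in k and strictly increasing in p. -/
/-- `r_{n,p,k} = (2p/3)·√((n-1)/(k(n+k-2)))`. -/
noncomputable def rQuant (n p k : ℕ) : ℝ :=
  2 * (p : ℝ) / 3 * Real.sqrt (((n : ℝ) - 1) / ((k : ℝ) * ((n : ℝ) + (k : ℝ) - 2)))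

/-- `δ₁(n,k,p) = (p/(2k(n+k-2)) + r_{n,p,k}) / (1 - p/(2k(n+k-2)) + r_{n,p,k})`. -/
noncomputable def delta1 (n k p : ℕ) : ℝ :=
  ((p : ℝ) / (2 * (k : ℝ) * ((n : ℝ) + (k : ℝ) - 2)) + rQuant n p k) /
    (1 - (p : ℝ) / (2 * (k : ℝ) * ((n : ℝ) + (k : ℝ) - 2)) + rQuant n p k)

private lemma delta_aux (a1 r1 a2 r2 : ℝ) (h1 : a1 < r1) (h2 : a2 < r2)
    (h3 : 0 < a1) (hsum : a2 + r2 < a1 + r1) (hcross : a2 * r1 ≤ a1 * r2) :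
    (a2 + r2) / (1 - a2 + r2) < (a1 + r1) / (1 - a1 + r1) := by
  have d1 : 0 < 1 - a1 + r1 := by linarith
  have d2 : 0 < 1 - a2 + r2 := by linarith
  rw [div_lt_div_iff₀ d2 d1]
  nlinarith

private lemma sqrt_ge_two {K : ℝ} (hK : 8 ≤ K) : 2 ≤ Real.sqrt K := by
  have h := Real.sq_sqrt (by linarith : (0:ℝ) ≤ K)
  have h0 := Real.sqrt_nonneg K
  nlinarith

private lemma ar_lt {q K t : ℝ} (hq : 0 < q) (hK : 8 ≤ K) (ht : 1 ≤ t) :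
    q / (2*K) < 2*q/3 * (t / Real.sqrt K) := by
  have hs2 : 2 ≤ Real.sqrt K := sqrt_ge_two hK
  have hsq : Real.sqrt K ^ 2 = K := Real.sq_sqrt (by linarith)
  set s := Real.sqrt K with hs
  have hs0 : (0:ℝ) < s := by linarith
  have h1 : 2*q/3 * (t/s) = (2*q*t)/(3*s) := by
    field_simp
  rw [h1, div_lt_div_iff₀ (by nlinarith) (by nlinarith)]
  nlinarith [mul_nonneg (mul_nonneg hq.le (sq_nonneg s)) (by linarith : (0:ℝ) ≤ t - 1),
    mul_nonneg (mul_pos hq hs0).le (by linarith : (0:ℝ) ≤ s - 2), mul_pos hq hs0]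

private lemma sum_mono {q t K1 K2 : ℝ} (hq : 0 < q) (ht : 0 < t) (h1 : 0 < K1) (h12 : K1 < K2) :
    q/(2*K2) + 2*q/3*(t/Real.sqrt K2) < q/(2*K1) + 2*q/3*(t/Real.sqrt K1) := by
  have hs1 : 0 < Real.sqrt K1 := Real.sqrt_pos.2 h1
  have hss : Real.sqrt K1 < Real.sqrt K2 := Real.sqrt_lt_sqrt h1.le h12
  have e1 : q/(2*K2) < q/(2*K1) := by
    apply div_lt_div_of_pos_left hq (by linarith) (by linarith)
  have e2 : t/Real.sqrt K2 < t/Real.sqrt K1 := div_lt_div_of_pos_left ht hs1 hss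
  have e3 : 2*q/3*(t/Real.sqrt K2) < 2*q/3*(t/Real.sqrt K1) :=
    mul_lt_mul_of_pos_left e2 (by positivity)
  linarith

private lemma cross_le {q t K1 K2 : ℝ} (hq : 0 < q) (ht : 0 < t) (h1 : 0 < K1) (h12 : K1 ≤ K2) :
    q/(2*K2) * (2*q/3*(t/Real.sqrt K1)) ≤ q/(2*K1) * (2*q/3*(t/Real.sqrt K2)) := by
  have h2 : 0 < K2 := lt_of_lt_of_le h1 h12
  have hs1 : 0 < Real.sqrt K1 := Real.sqrt_pos.2 h1
  have hs2 : 0 < Real.sqrt K2 := Real.sqrt_pos.2 h2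
  have hss : Real.sqrt K1 ≤ Real.sqrt K2 := Real.sqrt_le_sqrt h12
  have hsq1 : Real.sqrt K1 ^ 2 = K1 := Real.sq_sqrt h1.le
  have hsq2 : Real.sqrt K2 ^ 2 = K2 := Real.sq_sqrt h2.le
  set s1 := Real.sqrt K1
  set s2 := Real.sqrt K2
  have key : K1 * s2 ≤ K2 * s1 := by
    nlinarith [mul_nonneg (mul_nonneg hs1.le hs2.le) (by linarith : (0:ℝ) ≤ s2 - s1)]
  have hkey : (1:ℝ)/(K2*s1) ≤ 1/(K1*s2) :=
    one_div_le_one_div_of_le (by positivity) key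
  have e1 : q/(2*K2) * (2*q/3*(t/s1)) = (q^2*t/3) * (1/(K2*s1)) := by
    field_simp
  have e2 : q/(2*K1) * (2*q/3*(t/s2)) = (q^2*t/3) * (1/(K1*s2)) := by
    field_simp
  rw [e1, e2]
  exact mul_le_mul_of_nonneg_left hkey (by positivity)

/-- For `n ≥ 4`, `p ≥ 1`, `k ≥ 2`, the threshold `δ₁(n,k,p)` is strictly decreasing in `k`
and strictly increasing in `p`. -/
theorem delta1_monotone (n k p : ℕ) (hn : 4 ≤ n) (hk : 2 ≤ k) (hp : 1 ≤ p) :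
    delta1 n (k + 1) p < delta1 n k p ∧ delta1 n k p < delta1 n k (p + 1) := by
  have hn' : (4:ℝ) ≤ (n:ℝ) := by exact_mod_cast hn
  have hk' : (2:ℝ) ≤ (k:ℝ) := by exact_mod_cast hk
  have hp' : (1:ℝ) ≤ (p:ℝ) := by exact_mod_cast hp
  have ht1 : 1 ≤ Real.sqrt ((n:ℝ)-1) := by
    have h := Real.sq_sqrt (show (0:ℝ) ≤ (n:ℝ)-1 by linarith)
    nlinarith [Real.sqrt_nonneg ((n:ℝ)-1)]
  have ht0 : 0 < Real.sqrt ((n:ℝ)-1) := by linarith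
  have hK1 : (8:ℝ) ≤ (k:ℝ)*((n:ℝ)+(k:ℝ)-2) := by nlinarith
  have hK2 : (8:ℝ) ≤ ((k:ℝ)+1)*((n:ℝ)+(k:ℝ)-1) := by nlinarith
  have hK12 : (k:ℝ)*((n:ℝ)+(k:ℝ)-2) < ((k:ℝ)+1)*((n:ℝ)+(k:ℝ)-1) := by nlinarith
  have hK1pos : (0:ℝ) < (k:ℝ)*((n:ℝ)+(k:ℝ)-2) := by linarith
  have hppos : (0:ℝ) < (p:ℝ) := by linarith
  unfold delta1 rQuant
  push_cast
  rw [show (n:ℝ) + ((k:ℝ)+1) - 2 = (n:ℝ)+(k:ℝ)-1 from by ring]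
  simp only [show ∀ x y : ℝ, 2*x*y = 2*(x*y) from fun x y => by ring]
  simp only [Real.sqrt_div (show (0:ℝ) ≤ (n:ℝ)-1 by linarith)]
  constructor
  · apply delta_aux
    · exact ar_lt hppos hK1 ht1
    · exact ar_lt hppos hK2 ht1
    · positivity
    · exact sum_mono hppos ht0 hK1pos hK12
    · exact cross_le hppos ht0 hK1pos hK12.le
  · apply delta_aux
    · exact ar_lt (by linarith : (0:ℝ) < (p:ℝ)+1) hK1 ht1
    · exact ar_lt hppos hK1 ht1
    · positivity
    · have hd : (0:ℝ) < 2*((k:ℝ)*((n:ℝ)+(k:ℝ)-2)) := by linarith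
      have hts : 0 < Real.sqrt ((n:ℝ)-1)/Real.sqrt ((k:ℝ)*((n:ℝ)+(k:ℝ)-2)) :=
        div_pos ht0 (Real.sqrt_pos.2 hK1pos)
      have eA : (p:ℝ)/(2*((k:ℝ)*((n:ℝ)+(k:ℝ)-2))) < ((p:ℝ)+1)/(2*((k:ℝ)*((n:ℝ)+(k:ℝ)-2))) := by
        rw [div_lt_div_iff₀ hd hd]
        nlinarith
      have eR : 2*(p:ℝ)/3*(Real.sqrt ((n:ℝ)-1)/Real.sqrt ((k:ℝ)*((n:ℝ)+(k:ℝ)-2)))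
          < 2*((p:ℝ)+1)/3*(Real.sqrt ((n:ℝ)-1)/Real.sqrt ((k:ℝ)*((n:ℝ)+(k:ℝ)-2))) :=
        mul_lt_mul_of_pos_right (by linarith) hts
      linarith
    · exact le_of_eq (by ring)
end
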